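/- Let L ≥ K ≥ 1 be integers and let w : [L] → [0, 1] satisfy w(1) ≥ w(2) ≥ … ≥ w(L). Let ŵ, θ, g, h : [L] → ℝ satisfy |ŵ(i) − w(i)| ≤ g(i) and |θ(i) − ŵ(i)| ≤ h(i) for all i ∈ [L]. For an ordered K-tuple S = (i_1, …, i_K) of distinct items define F(S) = Σ_{k=1}^K [∏_{j=1}^{k−1} (1 − w(i_j))] · (g(i_k) + h(i_k)). Let S_t = (i_1, …, i_K) be distinct items with θ(i_1) ≥ θ(i_2) ≥ … ≥ θ(i_K) ≥ θ(j) for every j ∉ S_t, and let S̃ be any ordered K-tuple of distinct items satisfying F(S̃) ≥ r(S* | w) − r(S̃ | w), where S* = (1, …, K). Then r(S* | w) − r(S_t | w) ≤ 2 F(S̃) + F(S_t). -/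

import Mathlib

/-! Clamping the Thompson samples `θ` to `[0, 1]` gives a weight vector `v` with
`|v - w| ≤ g + h`, and `S_t` maximises `r(· | v)`. Telescoping the product
`∏ (1 - w) - ∏ (1 - v)` along a list `S` bounds `|r(S | w) - r(S | v)|` by `F(S)`, so
`r(S̃ | w) - r(S_t | w) ≤ F(S̃) + F(S_t)`; adding the assumed bound
`r(S* | w) - r(S̃ | w) ≤ F(S̃)` gives the claim. -/

open Finset

theorem abs_prod_sub_prod_le_sum {ι R : Type*} [LinearOrder ι] [CommRing R] [LinearOrder R]
    [IsStrictOrderedRing R] (s : Finset ι) {a b : ι → R} (ha : ∀ k, 0 ≤ a k)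
    (hb : ∀ k, |b k| ≤ 1) :
    |∏ k ∈ s, a k - ∏ k ∈ s, b k| ≤ ∑ k ∈ s, (∏ j ∈ s with j < k, a j) * |a k - b k| := by
  induction s using Finset.induction_on_max with
  | empty => simp
  | insert m s hlt ih =>
    have hm : m ∉ s := fun h => (hlt m h).false
    have hprefix_m : {j ∈ insert m s | j < m} = s := by
      ext j
      simp only [mem_filter, mem_insert]
      exact ⟨fun ⟨h, hj⟩ => h.resolve_left hj.ne, fun h => ⟨Or.inr h, hlt j h⟩⟩
    have hprefix : ∀ k ∈ s, {j ∈ insert m s | j < k} = {j ∈ s | j < k} := fun k hk => by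
      rw [filter_insert, if_neg (hlt k hk).not_gt]
    rw [prod_insert hm, prod_insert hm, sum_insert hm, hprefix_m,
      sum_congr rfl fun k hk => by rw [hprefix k hk]]
    have hA : 0 ≤ ∏ k ∈ s, a k := prod_nonneg fun k _ => ha k
    calc |a m * ∏ k ∈ s, a k - b m * ∏ k ∈ s, b k|
        = |(∏ k ∈ s, a k) * (a m - b m) + (∏ k ∈ s, a k - ∏ k ∈ s, b k) * b m| := by ring_nf
      _ ≤ (∏ k ∈ s, a k) * |a m - b m| + |∏ k ∈ s, a k - ∏ k ∈ s, b k| * |b m| := by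
        grw [abs_add_le, abs_mul, abs_mul, abs_of_nonneg hA]
      _ ≤ (∏ k ∈ s, a k) * |a m - b m| + ∑ k ∈ s, (∏ j ∈ s with j < k, a j) * |a k - b k| := by
        grw [hb m, mul_one, ih]

theorem abs_prod_one_sub_sub_prod_one_sub_le {κ : Type*} [Fintype κ] [LinearOrder κ]
    [LocallyFiniteOrderBot κ] {a b : κ → ℝ} (ha : ∀ k, a k ≤ 1) (hb : ∀ k, b k ∈ Set.Icc 0 1) :
    |∏ k, (1 - a k) - ∏ k, (1 - b k)| ≤ ∑ k, (∏ j ∈ Iio k, (1 - a j)) * |b k - a k| := by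
  have h := abs_prod_sub_prod_le_sum univ (fun k => sub_nonneg.2 (ha k))
    (b := fun k => 1 - b k) fun k => abs_le.2 ⟨by linarith [(hb k).2], by linarith [(hb k).1]⟩
  simpa only [filter_gt_eq_Iio, sub_sub_sub_cancel_left] using h

theorem prod_le_prod_of_card_eq {ι R : Type*} [DecidableEq ι] [CommSemiring R] [PartialOrder R]
    [IsOrderedRing R] {g : ι → R} (hg : ∀ x, 0 ≤ g x) {I T : Finset ι} (hcard : #I = #T)
    (hdom : ∀ x ∈ I, ∀ y ∉ I, g x ≤ g y) : ∏ x ∈ I, g x ≤ ∏ x ∈ T, g x := by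
  have hdiff : ∏ x ∈ I \ T, g x ≤ ∏ x ∈ T \ I, g x := by
    let e : (I \ T : Finset ι) ≃ (T \ I : Finset ι) := equivOfCardEq (card_sdiff_comm hcard)
    rw [← prod_coe_sort (I \ T), ← prod_coe_sort (T \ I), ← e.symm.prod_comp]
    exact prod_le_prod (fun _ _ => hg _) fun y _ =>
      hdom _ (mem_sdiff.mp (e.symm y).2).1 _ (mem_sdiff.mp y.2).2
  rw [← prod_inter_mul_prod_sdiff I T, ← prod_inter_mul_prod_sdiff T I, inter_comm T]
  exact mul_le_mul_of_nonneg_left hdiff (prod_nonneg fun x _ => hg x)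

theorem prod_comp_le_prod_comp_of_injective {κ ι R : Type*} [Fintype κ] [CommSemiring R]
    [PartialOrder R] [IsOrderedRing R] {g : ι → R} (hg : ∀ x, 0 ≤ g x) {i S : κ → ι}
    (hi : Function.Injective i) (hS : Function.Injective S)
    (hdom : ∀ k, ∀ y ∉ Set.range i, g (i k) ≤ g y) : ∏ k, g (i k) ≤ ∏ k, g (S k) := by
  classical
  rw [← prod_image hi.injOn, ← prod_image hS.injOn]
  refine prod_le_prod_of_card_eq hg
    (by rw [card_image_of_injective _ hi, card_image_of_injective _ hS]) fun x hx y hy => ?_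
  obtain ⟨k, -, rfl⟩ := mem_image.mp hx
  exact hdom k y fun ⟨l, hl⟩ => hy (hl ▸ mem_image_of_mem i (mem_univ l))

/-- (Deterministic core of Lemma 4 / gap-bound for TS-Cascade.)
With `F(S) = ∑_k [∏_{j<k} (1 - w(i_j))] (g(i_k) + h(i_k))`, if `S_t` is the greedy list for the
Thompson samples `θ` and `S̃` is any ordered `K`-tuple with `F(S̃) ≥ r(S*|w) - r(S̃|w)`, then
`r(S*|w) - r(S_t|w) ≤ 2 F(S̃) + F(S_t)`. -/
theorem stmt_4 (L K : ℕ) (hK : 1 ≤ K) (hKL : K ≤ L)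
    (w : Fin L → ℝ) (hw01 : ∀ j, 0 ≤ w j ∧ w j ≤ 1)
    (wHat θ g h : Fin L → ℝ)
    (hg : ∀ j, |wHat j - w j| ≤ g j) (hh : ∀ j, |θ j - wHat j| ≤ h j)
    (F : (Fin K → Fin L) → ℝ)
    (hF : ∀ S : Fin K → Fin L,
      F S = ∑ k : Fin K, (∏ j ∈ Finset.Iio k, (1 - w (S j))) * (g (S k) + h (S k)))
    (i : Fin K → Fin L) (hi : Function.Injective i)
    (hsort : ∀ k l : Fin K, k ≤ l → θ (i l) ≤ θ (i k))
    (htop : ∀ j : Fin L, j ∉ Set.range i → θ j ≤ θ (i ⟨K - 1, by omega⟩))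
    (iTilde : Fin K → Fin L) (hiTilde : Function.Injective iTilde)
    (hS : (1 - ∏ k : Fin K, (1 - w (Fin.castLE hKL k))) - (1 - ∏ k : Fin K, (1 - w (iTilde k)))
      ≤ F iTilde) :
    (1 - ∏ k : Fin K, (1 - w (Fin.castLE hKL k))) - (1 - ∏ k : Fin K, (1 - w (i k)))
      ≤ 2 * F iTilde + F i := by
  let v : Fin L → ℝ := fun x => Set.projIcc 0 1 zero_le_one (θ x)
  have hv : ∀ x, v x ∈ Set.Icc 0 1 := fun x => (Set.projIcc 0 1 zero_le_one (θ x)).2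
  have hvw : ∀ x, |v x - w x| ≤ g x + h x := fun x => calc
    |v x - w x| = |(Set.projIcc 0 1 zero_le_one (θ x) : ℝ) - Set.projIcc 0 1 zero_le_one (w x)| := by
        rw [Set.projIcc_of_mem _ (hw01 x)]
    _ ≤ |θ x - w x| := Set.abs_projIcc_sub_projIcc _
    _ ≤ |θ x - wHat x| + |wHat x - w x| := abs_sub_le _ _ _
    _ ≤ g x + h x := by linarith [hg x, hh x]
  have hclose : ∀ S : Fin K → Fin L, |∏ k, (1 - w (S k)) - ∏ k, (1 - v (S k))| ≤ F S := by
    intro S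
    rw [hF]
    refine (abs_prod_one_sub_sub_prod_one_sub_le (fun k => (hw01 (S k)).2) fun k => hv (S k)).trans
      (sum_le_sum fun k _ => ?_)
    exact mul_le_mul_of_nonneg_left (hvw _) (prod_nonneg fun j _ => sub_nonneg.2 (hw01 _).2)
  have hgreedy : ∏ k, (1 - v (i k)) ≤ ∏ k, (1 - v (iTilde k)) := by
    refine prod_comp_le_prod_comp_of_injective (fun x => sub_nonneg.2 (hv x).2) hi hiTilde
      fun k y hy => sub_le_sub_left (Subtype.mono_coe _ (Set.monotone_projIcc _ ?_)) 1
    exact (htop y hy).trans (hsort _ _ (Fin.le_def.2 (by simp only; omega)))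
  linarith [abs_le.mp (hclose i), abs_le.mp (hclose iTilde)]
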